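/- arXiv:1910.13211 — 5 statements merged into one kernel-verified Lean document; each statement's English description precedes it below -/
import Mathlib

section
/- Let n* ∈ (0,1) and 0 < ε < 1/2. The regularized convex potential ψ₊,ε : ℝ → ℝ is twice continuously differentiable on ℝ, with ψ₊,ε''(n) = ψ₊''(ε) for n ≤ ε, ψ₊,ε''(n) = ψ₊''(n) for ε ≤ n ≤ 1 − ε, and ψ₊,ε''(n) = ψ₊''(1 − ε) for n ≥ 1 − ε. Moreover, if n* ≤ 1 − (2/3)³, then ψ₊,ε is convex on all of ℝ. -/
/-!
Outside `[ε, 1 - ε]` the function `ψ₊,ε` is the second-order Taylor polynomial of `ψ₊`, so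
values, first and second derivatives of the pieces agree at the junction points. Differentiating
piecewise twice shows that `ψ₊,ε''` is `ψ₊''` composed with the clamp
`n ↦ max ε (min n (1 - ε))`, a continuous function. For convexity it then suffices that
`ψ₊'' ≥ 0` on `(-∞, 1)`, i.e. `2n(1 - n)² ≤ 1 - n*`; the left side is maximal at `n = 1/3`,
where it equals `(2/3)³`.
-/

/-- The convex part of the single-well potential: `ψ₊(n) = −(1−n*)·log(1−n) − n³/3`. -/
noncomputable def psiPlus (ns n : ℝ) : ℝ :=
  -(1 - ns) * Real.log (1 - n) - n ^ 3 / 3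

/-- Its derivative `ψ₊'(n) = (1−n*)/(1−n) − n²`. -/
noncomputable def psiPlusD (ns n : ℝ) : ℝ := (1 - ns) / (1 - n) - n ^ 2

/-- Its second derivative `ψ₊''(n) = (1−n*)/(1−n)² − 2n`. -/
noncomputable def psiPlusDD (ns n : ℝ) : ℝ := (1 - ns) / (1 - n) ^ 2 - 2 * n

/-- The regularized convex potential `ψ₊,ε : ℝ → ℝ`, obtained by freezing the second
derivative of `ψ₊` outside `[ε, 1−ε]` (second-order Taylor extensions at `ε` and `1−ε`). -/
noncomputable def psiPlusEps (ns ε n : ℝ) : ℝ :=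
  if n ≤ ε then
    psiPlus ns ε + psiPlusD ns ε * (n - ε) + (1 / 2) * psiPlusDD ns ε * (n - ε) ^ 2
  else if n ≤ 1 - ε then psiPlus ns n
  else
    psiPlus ns (1 - ε) + psiPlusD ns (1 - ε) * (n - (1 - ε))
      + (1 / 2) * psiPlusDD ns (1 - ε) * (n - (1 - ε)) ^ 2

open Set Filter

section Gluing

variable {A B C A' B' C' : ℝ → ℝ} {a b x : ℝ}

theorem hasDerivAt_ite_le (hA : x ≤ a → HasDerivAt A (A' x) x)
    (hB : a ≤ x → HasDerivAt B (B' x) x) (hval : A a = B a) (hder : A' a = B' a) :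
    HasDerivAt (fun y => if y ≤ a then A y else B y) (if x ≤ a then A' x else B' x) x := by
  rcases lt_trichotomy x a with hxa | rfl | hax
  · rw [if_pos hxa.le]
    exact (hA hxa.le).congr_of_eventuallyEq <|
      eventuallyEq_of_mem (Iio_mem_nhds hxa) fun y hy => if_pos (le_of_lt hy)
  · rw [if_pos le_rfl]
    have hleft : HasDerivWithinAt (fun y => if y ≤ x then A y else B y) (A' x) (Iic x) x :=
      (hA le_rfl).hasDerivWithinAt.congr (fun y hy => if_pos hy) (if_pos le_rfl)
    have hright : HasDerivWithinAt (fun y => if y ≤ x then A y else B y) (A' x) (Ici x) x := by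
      refine hder ▸ (hB le_rfl).hasDerivWithinAt.congr (fun y hy => ?_) (by simp [hval])
      rcases (mem_Ici.mp hy).eq_or_lt with rfl | hxy
      · simp [hval]
      · exact if_neg (not_le.mpr hxy)
    simpa [Iic_union_Ici, hasDerivWithinAt_univ] using hleft.union hright
  · rw [if_neg (not_le.mpr hax)]
    exact (hB hax.le).congr_of_eventuallyEq <|
      eventuallyEq_of_mem (Ioi_mem_nhds hax) fun y hy => if_neg (not_le.mpr hy)

theorem hasDerivAt_ite_le_ite_le (hab : a ≤ b) (hA : x ≤ a → HasDerivAt A (A' x) x)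
    (hB : a ≤ x → x ≤ b → HasDerivAt B (B' x) x) (hC : b ≤ x → HasDerivAt C (C' x) x)
    (hvala : A a = B a) (hvalb : B b = C b) (hdera : A' a = B' a) (hderb : B' b = C' b) :
    HasDerivAt (fun y => if y ≤ a then A y else if y ≤ b then B y else C y)
      (if x ≤ a then A' x else if x ≤ b then B' x else C' x) x :=
  hasDerivAt_ite_le (B := fun y => if y ≤ b then B y else C y)
    (B' := fun y => if y ≤ b then B' y else C' y) hA
    (fun hax => hasDerivAt_ite_le (hB hax) hC hvalb hderb)
    (by rw [if_pos hab, hvala]) (by rw [if_pos hab, hdera])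

end Gluing

theorem ite_le_ite_le_eq_max_min {α : Type*} {a b : ℝ} (hab : a ≤ b) (g : ℝ → α) (x : ℝ) :
    (if x ≤ a then g a else if x ≤ b then g x else g b) = g (max a (min x b)) := by
  split_ifs with hxa hxb
  · rw [min_eq_left (hxa.trans hab), max_eq_left hxa]
  · rw [min_eq_left hxb, max_eq_right (le_of_not_ge hxa)]
  · rw [min_eq_right (le_of_not_ge hxb), max_eq_right hab]

theorem contDiff_two_of_hasDerivAt {f f' f'' : ℝ → ℝ} (hf : ∀ x, HasDerivAt f (f' x) x)
    (hf' : ∀ x, HasDerivAt f' (f'' x) x) (hf'' : Continuous f'') : ContDiff ℝ 2 f := by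
  have hderiv : deriv f = f' := funext fun x => (hf x).deriv
  have hderiv' : deriv f' = f'' := funext fun x => (hf' x).deriv
  rw [show (2 : WithTop ℕ∞) = 1 + 1 from rfl, contDiff_succ_iff_deriv, hderiv,
    contDiff_one_iff_deriv, hderiv']
  exact ⟨fun x => (hf x).differentiableAt, by simp, fun x => (hf' x).differentiableAt, hf''⟩

theorem hasDerivAt_taylor2 (p₀ p₁ p₂ c x : ℝ) :
    HasDerivAt (fun y => p₀ + p₁ * (y - c) + (1 / 2) * p₂ * (y - c) ^ 2)
      (p₁ + p₂ * (x - c)) x := by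
  have hlin : HasDerivAt (fun y : ℝ => y - c) 1 x := (hasDerivAt_id x).sub_const c
  refine (((hlin.const_mul p₁).const_add p₀).add
    ((hlin.pow 2).const_mul ((1 / 2) * p₂))).congr_deriv ?_
  norm_num
  ring

theorem hasDerivAt_taylor1 (p₁ p₂ c x : ℝ) :
    HasDerivAt (fun y => p₁ + p₂ * (y - c)) p₂ x := by
  simpa using (((hasDerivAt_id x).sub_const c).const_mul p₂).const_add p₁

theorem hasDerivAt_psiPlus (ns : ℝ) {x : ℝ} (hx : x ≠ 1) :
    HasDerivAt (psiPlus ns) (psiPlusD ns x) x := by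
  have hne : 1 - x ≠ 0 := sub_ne_zero.mpr hx.symm
  have hlog : HasDerivAt (fun y => Real.log (1 - y)) ((1 - x)⁻¹ * (-1)) x :=
    (Real.hasDerivAt_log hne).comp x (by simpa using (hasDerivAt_id x).const_sub 1)
  refine ((hlog.const_mul (-(1 - ns))).sub ((hasDerivAt_pow 3 x).div_const 3)).congr_deriv ?_
  unfold psiPlusD
  field_simp
  norm_num
  ring

theorem hasDerivAt_psiPlusD (ns : ℝ) {x : ℝ} (hx : x ≠ 1) :
    HasDerivAt (psiPlusD ns) (psiPlusDD ns x) x := by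
  have hne : 1 - x ≠ 0 := sub_ne_zero.mpr hx.symm
  have hinv : HasDerivAt (fun y => (1 - ns) / (1 - y))
      ((0 * (1 - x) - (1 - ns) * (-1)) / (1 - x) ^ 2) x :=
    (hasDerivAt_const x (1 - ns)).div (by simpa using (hasDerivAt_id x).const_sub 1) hne
  refine (hinv.sub (hasDerivAt_pow 2 x)).congr_deriv ?_
  unfold psiPlusDD
  field_simp
  ring

theorem psiPlusDD_nonneg {ns n : ℝ} (hns : ns ≤ 1 - (2 / 3 : ℝ) ^ 3) (hn : n < 1) :
    0 ≤ psiPlusDD ns n := by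
  unfold psiPlusDD
  rw [sub_nonneg, le_div_iff₀ (pow_pos (sub_pos.mpr hn) 2)]
  nlinarith [mul_nonneg (sq_nonneg (3 * n - 1)) (by linarith : (0 : ℝ) ≤ 8 - 6 * n)]

namespace PsiPlusEps

variable (ns ε : ℝ)

noncomputable def deriv₁ (n : ℝ) : ℝ :=
  if n ≤ ε then psiPlusD ns ε + psiPlusDD ns ε * (n - ε)
  else if n ≤ 1 - ε then psiPlusD ns n
  else psiPlusD ns (1 - ε) + psiPlusDD ns (1 - ε) * (n - (1 - ε))

noncomputable def deriv₂ (n : ℝ) : ℝ := psiPlusDD ns (max ε (min n (1 - ε)))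

variable {ns ε}

theorem hasDerivAt (hε : 0 < ε) (hε' : ε ≤ 1 / 2) (x : ℝ) :
    HasDerivAt (psiPlusEps ns ε) (deriv₁ ns ε x) x := by
  unfold psiPlusEps deriv₁
  apply hasDerivAt_ite_le_ite_le (by linarith)
  · exact fun _ => hasDerivAt_taylor2 _ _ _ _ x
  · exact fun _ hx => hasDerivAt_psiPlus ns (by linarith)
  · exact fun _ => hasDerivAt_taylor2 _ _ _ _ x
  all_goals simp

theorem hasDerivAt_deriv₁ (hε : 0 < ε) (hε' : ε ≤ 1 / 2) (x : ℝ) :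
    HasDerivAt (deriv₁ ns ε) (deriv₂ ns ε x) x := by
  rw [deriv₂, ← ite_le_ite_le_eq_max_min (by linarith) (psiPlusDD ns)]
  unfold deriv₁
  apply hasDerivAt_ite_le_ite_le (by linarith)
  · exact fun _ => hasDerivAt_taylor1 _ _ _ x
  · exact fun _ hx => hasDerivAt_psiPlusD ns (by linarith)
  · exact fun _ => hasDerivAt_taylor1 _ _ _ x
  all_goals simp

theorem continuous_deriv₂ (hε : 0 < ε) (hε' : ε ≤ 1 / 2) : Continuous (deriv₂ ns ε) := by
  have hclamp : ∀ x, max ε (min x (1 - ε)) ∈ Icc ε (1 - ε) := fun x =>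
    ⟨le_max_left _ _, max_le (by linarith) (min_le_right _ _)⟩
  refine ContinuousOn.comp_continuous (f := fun x => max ε (min x (1 - ε))) ?_ (by fun_prop)
    hclamp
  intro y hy
  have : (1 - y) ^ 2 ≠ 0 := pow_ne_zero 2 (by linarith [hy.2])
  unfold psiPlusDD
  fun_prop (disch := assumption)

end PsiPlusEps

theorem stmt4_general (ns ε : ℝ)
    (hε : 0 < ε) (hε' : ε < 1 / 2) :
    ContDiff ℝ 2 (psiPlusEps ns ε) ∧
    (∀ n : ℝ, n ≤ ε → deriv (deriv (psiPlusEps ns ε)) n = psiPlusDD ns ε) ∧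
    (∀ n ∈ Set.Icc ε (1 - ε), deriv (deriv (psiPlusEps ns ε)) n = psiPlusDD ns n) ∧
    (∀ n : ℝ, 1 - ε ≤ n → deriv (deriv (psiPlusEps ns ε)) n = psiPlusDD ns (1 - ε)) ∧
    (ns ≤ 1 - (2 / 3 : ℝ) ^ 3 → ConvexOn ℝ Set.univ (psiPlusEps ns ε)) := by
  have hf := PsiPlusEps.hasDerivAt (ns := ns) hε hε'.le
  have hf' := PsiPlusEps.hasDerivAt_deriv₁ (ns := ns) hε hε'.le
  have hd : deriv (psiPlusEps ns ε) = PsiPlusEps.deriv₁ ns ε := funext fun x => (hf x).deriv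
  have hdd : deriv (deriv (psiPlusEps ns ε)) = PsiPlusEps.deriv₂ ns ε := by
    rw [hd]
    exact funext fun x => (hf' x).deriv
  refine ⟨contDiff_two_of_hasDerivAt hf hf' (PsiPlusEps.continuous_deriv₂ hε hε'.le),
    fun n hn => ?_, fun n hn => ?_, fun n hn => ?_, fun hns => ?_⟩
  · rw [hdd, PsiPlusEps.deriv₂, min_eq_left (by linarith), max_eq_left hn]
  · rw [hdd, PsiPlusEps.deriv₂, min_eq_left hn.2, max_eq_right hn.1]
  · rw [hdd, PsiPlusEps.deriv₂, min_eq_right hn, max_eq_right (by linarith)]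
  · refine convexOn_univ_of_deriv2_nonneg (fun x => (hf x).differentiableAt)
      (hd ▸ fun x => (hf' x).differentiableAt) fun x => ?_
    rw [Function.iterate_succ, Function.iterate_one, Function.comp_apply, hdd]
    exact psiPlusDD_nonneg hns ((max_le (by linarith) (min_le_right x (1 - ε))).trans_lt
      (by linarith))

theorem stmt4 (ns ε : ℝ) (hns : ns ∈ Set.Ioo (0 : ℝ) 1)
    (hε : 0 < ε) (hε' : ε < 1 / 2) :
    ContDiff ℝ 2 (psiPlusEps ns ε) ∧
    (∀ n : ℝ, n ≤ ε → deriv (deriv (psiPlusEps ns ε)) n = psiPlusDD ns ε) ∧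
    (∀ n ∈ Set.Icc ε (1 - ε), deriv (deriv (psiPlusEps ns ε)) n = psiPlusDD ns n) ∧
    (∀ n : ℝ, 1 - ε ≤ n → deriv (deriv (psiPlusEps ns ε)) n = psiPlusDD ns (1 - ε)) ∧
    (ns ≤ 1 - (2 / 3 : ℝ) ^ 3 → ConvexOn ℝ Set.univ (psiPlusEps ns ε)) :=
  stmt4_general ns ε hε hε'
end

section
/- Let n* ∈ (0,1). For every c ∈ (0,1) there exist ε₀ ∈ (0,1/2) and a finite constant C₁ > 0 such that for all ε ∈ (0, ε₀) and all n ∈ ℝ, ψ₊,ε(n) ≥ c·(1 − n*)/(2ε²)·(max(n − 1, 0))² − C₁. In particular, the regularized potentials ψ₊,ε are bounded from below uniformly in ε and grow quadratically beyond n = 1 with a coefficient of order ε⁻². -/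
/-! The branches of `ψ₊,ε` at and below `n = 1 − ε` are bounded below uniformly: `ψ₊ ≥ −1/3` on
`[0, 1]`, and the left Taylor parabola has curvature `ψ₊''(ε) ≥ (1 − n*)/2` and slope
`|ψ₊'(ε)| ≤ 2`, so its minimum is at least `−1/3 − 4/(1 − n*)`. Beyond `1 − ε` the slope
`ψ₊'(1 − ε) = (1 − n*)/ε − (1 − ε)²` is nonnegative and the curvature
`ψ₊''(1 − ε) = (1 − n*)/ε² − 2(1 − ε)` exceeds `c(1 − n*)/ε²` once `ε ≤ (1 − c)(1 − n*)/4`. -/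

lemma sub_sq_div_le_quadratic {A : ℝ} (hA : 0 < A) (P B x : ℝ) :
    P - B ^ 2 / (2 * A) ≤ P + B * x + 1 / 2 * A * x ^ 2 := by
  have key : P + B * x + 1 / 2 * A * x ^ 2 - (P - B ^ 2 / (2 * A)) =
      (A * x + B) ^ 2 / (2 * A) := by
    field_simp
    ring
  have : 0 ≤ (A * x + B) ^ 2 / (2 * A) := by positivity
  linarith

lemma le_quadratic_of_le {P D DD q y m : ℝ} (hD : 0 ≤ D) (hq : 0 ≤ q) (hqDD : q ≤ DD)
    (hm : 0 ≤ m) (hmy : m ≤ y) :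
    P + 1 / 2 * q * m ^ 2 ≤ P + D * y + 1 / 2 * DD * y ^ 2 := by
  have hy : 0 ≤ y := hm.trans hmy
  have hm2 : m ^ 2 ≤ y ^ 2 := pow_le_pow_left₀ hm hmy 2
  nlinarith [mul_nonneg hD hy, mul_nonneg (sub_nonneg.2 hqDD) (sq_nonneg y),
    mul_nonneg hq (sub_nonneg.2 hm2)]

section Bounds

variable {ns ε : ℝ}

lemma neg_one_third_le_psiPlus (hns : ns ≤ 1) {n : ℝ} (hn0 : 0 ≤ n) (hn1 : n ≤ 1) :
    -(1 / 3) ≤ psiPlus ns n := by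
  have hlog : Real.log (1 - n) ≤ 0 := Real.log_nonpos (by linarith) (by linarith)
  have hn3 : n ^ 3 ≤ 1 := pow_le_one₀ hn0 hn1
  unfold psiPlus
  nlinarith [mul_nonneg (sub_nonneg.2 hns) (neg_nonneg.2 hlog)]

lemma abs_psiPlusD_le_two (hns0 : 0 ≤ ns) (hns1 : ns ≤ 1) (hε0 : 0 ≤ ε) (hε : ε ≤ 1 / 4) :
    |psiPlusD ns ε| ≤ 2 := by
  have h1ε : 0 < 1 - ε := by linarith
  have hub : (1 - ns) / (1 - ε) ≤ 2 := by rw [div_le_iff₀ h1ε]; linarith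
  have hlb : 0 ≤ (1 - ns) / (1 - ε) := div_nonneg (by linarith) h1ε.le
  unfold psiPlusD
  rw [abs_le]
  constructor <;> nlinarith

lemma half_le_psiPlusDD (hns0 : 0 ≤ ns) (hε0 : 0 ≤ ε) (hε : ε ≤ (1 - ns) / 4) :
    (1 - ns) / 2 ≤ psiPlusDD ns ε := by
  have h : 1 - ns ≤ (1 - ns) / (1 - ε) ^ 2 := by
    have hsq : (1 - ε) ^ 2 ≤ 1 := by nlinarith
    rw [le_div_iff₀ (by nlinarith)]
    exact mul_le_of_le_one_right (by linarith) hsq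
  unfold psiPlusDD
  linarith

lemma psiPlusD_one_sub_nonneg (hns0 : 0 ≤ ns) (hε0 : 0 < ε) (hε : ε ≤ 1 - ns) :
    0 ≤ psiPlusD ns (1 - ε) := by
  have h : 1 ≤ (1 - ns) / ε := by rw [le_div_iff₀ hε0]; linarith
  have hε1 : ε ≤ 1 := by linarith
  unfold psiPlusD
  rw [sub_sub_cancel]
  nlinarith

lemma mul_div_le_psiPlusDD_one_sub {c : ℝ} (hε0 : 0 < ε) (hε : ε ≤ (1 - c) * (1 - ns) / 4) :
    c * (1 - ns) / ε ^ 2 ≤ psiPlusDD ns (1 - ε) := by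
  have h : 2 * (1 - ε) ≤ (1 - c) * (1 - ns) / ε ^ 2 := by
    rw [le_div_iff₀ (by positivity)]
    nlinarith [sq_nonneg (ε - 1 / 2)]
  have heq : (1 - ns) / ε ^ 2 - c * (1 - ns) / ε ^ 2 = (1 - c) * (1 - ns) / ε ^ 2 := by ring
  unfold psiPlusDD
  rw [sub_sub_cancel]
  linarith

lemma neg_le_psiPlusEps_of_le_one_sub (hns0 : 0 ≤ ns) (hε0 : 0 < ε) (hε : ε ≤ (1 - ns) / 4)
    {n : ℝ} (hn : n ≤ 1 - ε) :
    -(1 / 3 + 4 / (1 - ns)) ≤ psiPlusEps ns ε n := by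
  have ha : 0 < 1 - ns := by linarith
  have hC : 0 < 4 / (1 - ns) := by positivity
  unfold psiPlusEps
  split_ifs with hnε
  · have hA := half_le_psiPlusDD hns0 hε0.le hε
    have hB := abs_le.1 (abs_psiPlusD_le_two hns0 (by linarith) hε0.le (by linarith))
    have hratio : psiPlusD ns ε ^ 2 / (2 * psiPlusDD ns ε) ≤ 4 / (1 - ns) := by
      gcongr
      · nlinarith
      · linarith
    have hP := neg_one_third_le_psiPlus (ns := ns) (n := ε) (by linarith) hε0.le (by linarith)
    have hmin := sub_sq_div_le_quadratic (A := psiPlusDD ns ε) (by linarith)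
      (psiPlus ns ε) (psiPlusD ns ε) (n - ε)
    linarith
  · have hP := neg_one_third_le_psiPlus (ns := ns) (n := n)
      (by linarith) (by linarith) (by linarith)
    linarith

lemma quadratic_le_psiPlusEps_of_one_sub_lt {c : ℝ} (hns0 : 0 ≤ ns) (hc0 : 0 ≤ c) (hc1 : c < 1)
    (hε0 : 0 < ε) (hε : ε ≤ (1 - c) * (1 - ns) / 4) {n : ℝ} (hn : 1 - ε < n) :
    c * (1 - ns) / (2 * ε ^ 2) * max (n - 1) 0 ^ 2 - 1 / 3 ≤ psiPlusEps ns ε n := by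
  have ha : 0 < 1 - ns := by nlinarith
  have hε1 : ε ≤ 1 - ns := by nlinarith
  have hε4 : ε ≤ 1 / 4 := by nlinarith
  have hP := neg_one_third_le_psiPlus (ns := ns) (n := 1 - ε)
    (by linarith) (by linarith) (by linarith)
  have hquad := le_quadratic_of_le (P := psiPlus ns (1 - ε)) (y := n - (1 - ε))
    (psiPlusD_one_sub_nonneg hns0 hε0 hε1) (by positivity) (mul_div_le_psiPlusDD_one_sub hε0 hε)
    (le_max_right (n - 1) 0) (max_le (by linarith) (by linarith))
  have hsplit : c * (1 - ns) / (2 * ε ^ 2) = 1 / 2 * (c * (1 - ns) / ε ^ 2) := by ring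
  unfold psiPlusEps
  rw [if_neg (by linarith), if_neg (by linarith), hsplit]
  linarith

end Bounds

theorem stmt5 (ns : ℝ) (hns : ns ∈ Set.Ioo (0 : ℝ) 1) :
    ∀ c ∈ Set.Ioo (0 : ℝ) 1, ∃ ε₀ ∈ Set.Ioo (0 : ℝ) (1 / 2), ∃ C₁ > (0 : ℝ),
      ∀ ε ∈ Set.Ioo (0 : ℝ) ε₀, ∀ n : ℝ,
        c * (1 - ns) / (2 * ε ^ 2) * (max (n - 1) 0) ^ 2 - C₁ ≤ psiPlusEps ns ε n := by
  obtain ⟨hns0, hns1⟩ := hns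
  rintro c ⟨hc0, hc1⟩
  have ha : 0 < 1 - ns := by linarith
  have hca : 0 < (1 - c) * (1 - ns) := mul_pos (by linarith) ha
  refine ⟨(1 - c) * (1 - ns) / 4, ⟨by positivity, by nlinarith⟩, 1 / 3 + 4 / (1 - ns),
    by positivity, ?_⟩
  rintro ε ⟨hε0, hε⟩ n
  have hC : 0 < 4 / (1 - ns) := by positivity
  rcases le_or_gt n (1 - ε) with hn | hn
  · have hmax : max (n - 1) 0 = 0 := max_eq_right (by linarith)
    have := neg_le_psiPlusEps_of_le_one_sub hns0.le hε0 (by nlinarith) hn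
    rw [hmax]
    linarith
  · have := quadratic_le_psiPlusEps_of_one_sub_lt hns0.le hc0.le hc1 hε0 hε.le hn
    linarith
end

section
/- (Nonnegativity and upper bound from the upwind mobility.) Let N ≥ 1, d ≥ 1, κ > 0, G ∈ ℕ, and let m ∈ ℝᴺ have positive entries. Let Q ∈ ℝᴺˣᴺ be symmetric with Q_{ij} ≤ 0 and |Q_{ij}| ≤ (d+1)·m_i/κ² for all i ≠ j, and set Λ_i = { j ≠ i : Q_{ij} ≠ 0 } with card(Λ_i) ≤ G for every i. Let n ∈ [0,1]ᴺ, ξ ∈ ℝᴺ, Δt ≥ 0, and define upwind mobility coefficients B_{ij} = n_i(1 − n_j)² if ξ_i > ξ_j and B_{ij} = n_j(1 − n_i)² otherwise. Define n'_i = n_i − (Δt/m_i)·Σ_{j ≠ i} Q_{ij} B_{ij} (ξ_j − ξ_i). If the CFL-type condition Δt·(d+1)·G/κ² · max_{i, j ∈ Λ_i} |ξ_j − ξ_i| ≤ 1 holds (the maximum taken as 0 if all Λ_i are empty), then 0 ≤ n'_i ≤ 1 for every i. -/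
/-!
Only the neighbours `j ∈ Λ i` contribute to the update of `n i`. Each contribution is the
upwind mobility times a signed Courant number `c` with `|c| ≤ 1 / G` (Fujii's bound on `Q` plus
the CFL condition). Upwinding makes `c ≥ 0` exactly when the mobility is `n i (1 - n j)² ≤ n i`,
and `c ≤ 0` when it is `n j (1 - n i)² ≤ 1 - n i`, so each of the at most `G` contributions moves
`n i` by at most `n i / G` downwards and `(1 - n i) / G` upwards.
-/

open Finset

noncomputable def upwindMobility (a b x y : ℝ) : ℝ :=
  if y < x then a * (1 - b) ^ 2 else b * (1 - a) ^ 2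

lemma upwindMobility_flux_mem_Icc {a b x y c : ℝ} (ha : a ∈ Set.Icc 0 1) (hb : b ∈ Set.Icc 0 1)
    (hc : |c| ≤ 1) (hc_nonneg : y < x → 0 ≤ c) (hc_nonpos : x ≤ y → c ≤ 0) :
    -(1 - a) ≤ c * upwindMobility a b x y ∧ c * upwindMobility a b x y ≤ a := by
  obtain ⟨ha₀, ha₁⟩ := ha
  obtain ⟨hb₀, hb₁⟩ := hb
  obtain ⟨hc₁, hc₂⟩ := abs_le.mp hc
  unfold upwindMobility
  split_ifs with hxy
  · have hc₀ := hc_nonneg hxy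
    have hB₀ : 0 ≤ a * (1 - b) ^ 2 := by positivity
    have hB : a * (1 - b) ^ 2 ≤ a := by
      nlinarith [mul_nonneg ha₀ (mul_nonneg hb₀ (by linarith : 0 ≤ 2 - b))]
    constructor <;> nlinarith [mul_nonneg hc₀ hB₀]
  · have hc₀ := hc_nonpos (not_lt.mp hxy)
    have hB₀ : 0 ≤ b * (1 - a) ^ 2 := by positivity
    have hB : b * (1 - a) ^ 2 ≤ 1 - a := by
      nlinarith [mul_nonneg (sub_nonneg.2 ha₁) (sub_nonneg.2 hb₁), sq_nonneg (1 - a)]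
    constructor <;> nlinarith [mul_nonpos_of_nonpos_of_nonneg hc₀ hB₀]

lemma abs_courant_le_one {Δt m q δ K G : ℝ} (hm : 0 < m) (hΔt : 0 ≤ Δt) (hG : 0 ≤ G)
    (hq : |q| ≤ K * m) (hCFL : Δt * K * G * |δ| ≤ 1) : |G * (Δt / m * q) * δ| ≤ 1 :=
  calc |G * (Δt / m * q) * δ| = G * Δt * |q| * |δ| / m := by
        rw [abs_mul, abs_mul, abs_mul, abs_div, abs_of_nonneg hG, abs_of_nonneg hΔt,
          abs_of_pos hm]
        ring
    _ ≤ G * Δt * (K * m) * |δ| / m := by gcongr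
    _ = Δt * K * G * |δ| := by field_simp
    _ ≤ 1 := hCFL

lemma Finset.sum_le_of_card_le_of_natCast_mul_le {ι K : Type*} [Field K] [LinearOrder K]
    [IsStrictOrderedRing K] {s : Finset ι} {f : ι → K} {a : K} {G : ℕ} (ha : 0 ≤ a)
    (hs : #s ≤ G) (hf : ∀ j ∈ s, G * f j ≤ a) : ∑ j ∈ s, f j ≤ a := by
  rcases s.eq_empty_or_nonempty with rfl | hne
  · simpa using ha
  have hG : (0 : K) < G := by exact_mod_cast hne.card_pos.trans_le hs
  refine le_of_mul_le_mul_left ?_ hG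
  calc (G : K) * ∑ j ∈ s, f j = ∑ j ∈ s, G * f j := mul_sum _ _ _
    _ ≤ #s • a := sum_le_card_nsmul _ _ _ hf
    _ = #s * a := nsmul_eq_mul _ _
    _ ≤ G * a := by gcongr

lemma Matrix.sum_ne_mul_eq_sum_ne_and_ne_zero {ι R : Type*} [Fintype ι] [DecidableEq ι]
    [NonUnitalNonAssocSemiring R] [DecidableEq R] (Q : Matrix ι ι R) (i : ι) (f : ι → R) :
    ∑ j ∈ univ.filter (· ≠ i), Q i j * f j
      = ∑ j ∈ univ.filter (fun j => j ≠ i ∧ Q i j ≠ 0), Q i j * f j := by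
  rw [← filter_filter, sum_filter_of_ne fun j _ h => left_ne_zero_of_mul h]

theorem stmt7_general (N d : ℕ)
    (κ : ℝ) (G : ℕ)
    (m : Fin N → ℝ) (hm : ∀ i, 0 < m i)
    (Q : Matrix (Fin N) (Fin N) ℝ)
    (hQoff : ∀ i j, i ≠ j → Q i j ≤ 0)
    (hQbound : ∀ i j, i ≠ j → |Q i j| ≤ (d + 1) * m i / κ ^ 2)
    (Λ : Fin N → Finset (Fin N))
    (hΛ : ∀ i, Λ i = Finset.univ.filter (fun j => j ≠ i ∧ Q i j ≠ 0))
    (hG : ∀ i, (Λ i).card ≤ G)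
    (n : Fin N → ℝ) (hn : ∀ i, n i ∈ Set.Icc (0 : ℝ) 1)
    (ξ : Fin N → ℝ) (Δt : ℝ) (hΔt : 0 ≤ Δt)
    (B : Fin N → Fin N → ℝ)
    (hB : ∀ i j, B i j = if ξ j < ξ i then n i * (1 - n j) ^ 2 else n j * (1 - n i) ^ 2)
    (n' : Fin N → ℝ)
    (hn' : ∀ i, n' i = n i -
      (Δt / m i) * ∑ j ∈ Finset.univ.filter (· ≠ i), Q i j * B i j * (ξ j - ξ i))
    (hCFL : ∀ i, ∀ j ∈ Λ i, Δt * (d + 1) * G / κ ^ 2 * |ξ j - ξ i| ≤ 1) :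
    ∀ i, 0 ≤ n' i ∧ n' i ≤ 1 := by
  intro i
  set t : Fin N → ℝ := fun j => Δt / m i * Q i j * B i j * (ξ j - ξ i)
  have hn'_eq : n' i = n i - ∑ j ∈ Λ i, t j := by
    simp only [hn', mul_assoc, Matrix.sum_ne_mul_eq_sum_ne_and_ne_zero, hΛ, mul_sum, t]
  have ht : ∀ j ∈ Λ i, -(1 - n i) ≤ G * t j ∧ G * t j ≤ n i := by
    intro j hj
    obtain ⟨hji, -⟩ : j ≠ i ∧ Q i j ≠ 0 := by simpa [hΛ] using hj
    have hw : Δt / m i * Q i j ≤ 0 :=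
      mul_nonpos_of_nonneg_of_nonpos (div_nonneg hΔt (hm i).le) (hQoff i j hji.symm)
    have hGw : (G : ℝ) * (Δt / m i * Q i j) ≤ 0 := mul_nonpos_of_nonneg_of_nonpos G.cast_nonneg hw
    have hc := abs_courant_le_one (hm i) hΔt G.cast_nonneg
      ((hQbound i j hji.symm).trans_eq (mul_div_right_comm _ _ _))
      ((le_of_eq (by ring)).trans (hCFL i j hj))
    have := upwindMobility_flux_mem_Icc (x := ξ i) (y := ξ j) (hn i) (hn j) hc
      (fun h => mul_nonneg_of_nonpos_of_nonpos hGw (by linarith))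
      (fun h => mul_nonpos_of_nonpos_of_nonneg hGw (by linarith))
    rwa [upwindMobility, ← hB, show G * (Δt / m i * Q i j) * (ξ j - ξ i) * B i j = G * t j by ring]
      at this
  obtain ⟨hn₀, hn₁⟩ := hn i
  have hupper := sum_le_of_card_le_of_natCast_mul_le hn₀ (hG i) fun j hj => (ht j hj).2
  have hlower := sum_le_of_card_le_of_natCast_mul_le (sub_nonneg.2 hn₁) (hG i) fun j hj =>
    (mul_neg (G : ℝ) (t j)).trans_le (neg_le.mp (ht j hj).1)
  rw [sum_neg_distrib] at hlower
  constructor <;> linarith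

theorem stmt7 (N d : ℕ) (hN : 1 ≤ N) (hd : 1 ≤ d)
    (κ : ℝ) (hκ : 0 < κ) (G : ℕ)
    (m : Fin N → ℝ) (hm : ∀ i, 0 < m i)
    (Q : Matrix (Fin N) (Fin N) ℝ) (hQsym : Q.IsSymm)
    (hQoff : ∀ i j, i ≠ j → Q i j ≤ 0)
    (hQbound : ∀ i j, i ≠ j → |Q i j| ≤ (d + 1) * m i / κ ^ 2)
    (Λ : Fin N → Finset (Fin N))
    (hΛ : ∀ i, Λ i = Finset.univ.filter (fun j => j ≠ i ∧ Q i j ≠ 0))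
    (hG : ∀ i, (Λ i).card ≤ G)
    (n : Fin N → ℝ) (hn : ∀ i, n i ∈ Set.Icc (0 : ℝ) 1)
    (ξ : Fin N → ℝ) (Δt : ℝ) (hΔt : 0 ≤ Δt)
    (B : Fin N → Fin N → ℝ)
    (hB : ∀ i j, B i j = if ξ j < ξ i then n i * (1 - n j) ^ 2 else n j * (1 - n i) ^ 2)
    (n' : Fin N → ℝ)
    (hn' : ∀ i, n' i = n i -
      (Δt / m i) * ∑ j ∈ Finset.univ.filter (· ≠ i), Q i j * B i j * (ξ j - ξ i))
    (hCFL : ∀ i, ∀ j ∈ Λ i, Δt * (d + 1) * G / κ ^ 2 * |ξ j - ξ i| ≤ 1) :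
    ∀ i, 0 ≤ n' i ∧ n' i ≤ 1 :=
  stmt7_general N d κ G m hm Q hQoff hQbound Λ hΛ hG n hn ξ Δt hΔt B hB n' hn' hCFL
end

section
/- (Bound preservation for the linear upwind scheme.) Let N ≥ 1, d ≥ 1, κ > 0, G ∈ ℕ, m ∈ ℝᴺ with positive entries and M = diag(m). Let Q ∈ ℝᴺˣᴺ be symmetric with Q_{ij} ≤ 0 and |Q_{ij}| ≤ (d+1)m_i/κ² for i ≠ j, with Λ_i = { j ≠ i : Q_{ij} ≠ 0 } and card(Λ_i) ≤ G. Let L ∈ ℝᴺˣᴺ satisfy L_{ij} ≤ 0 for i ≠ j and Σ_j L_{ij} = 0 for every i. Let Δt > 0, let n^k ∈ ℝᴺ with 0 ≤ n^k_i < 1 for all i, let φ ∈ ℝᴺ, and define the upwind coefficients B_{ij} = n^k_i(1 − n^k_j)² if φ_i > φ_j and B_{ij} = n^k_j(1 − n^k_i)² otherwise, and the matrix U by U_{ij} = Q_{ij}B_{ij} for i ≠ j and U_{ii} = −Σ_{j≠i}U_{ij}. If the strict CFL condition Δt·(d+1)·G/κ² · max_{i, j ∈ Λ_i}|φ_j −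 φ_i| < 1 holds, then the unique solution n^{k+1} of (M + ΔtL)n^{k+1} = Mn^k − ΔtUφ satisfies 0 ≤ n^{k+1}_i < 1 for every i. -/
/-!
`M + Δt L` has nonpositive off-diagonal entries and row sums `mᵢ > 0`, so by the discrete
maximum principle it suffices that the right-hand side `rᵢ = mᵢ nᵏᵢ - Δt (Uφ)ᵢ` lies in
`[0, mᵢ)`. As `U` has zero row sums, `Δt (Uφ)ᵢ` is a sum of at most `G` fluxes
`Δt Qᵢⱼ Bᵢⱼ (φⱼ - φᵢ)`. Fujii's bound and the CFL condition give `|Δt Qᵢⱼ (φⱼ - φᵢ)| < mᵢ / G`,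
and upwinding makes `Bᵢⱼ ≤ nᵏᵢ` for a flux leaving node `i` and `Bᵢⱼ ≤ 1 - nᵏᵢ` for one
entering it, so each flux lies in `(-(1 - nᵏᵢ) mᵢ / G, nᵏᵢ mᵢ / G]`.
-/

open Finset Matrix

namespace Matrix

variable {ι : Type*} [Fintype ι] {A : Matrix ι ι ℝ} {x : ι → ℝ}

lemma mulVec_apply_le_sum_mul_of_isMin (hA : ∀ i j, i ≠ j → A i j ≤ 0) {i : ι}
    (hi : ∀ j, x i ≤ x j) : (A *ᵥ x) i ≤ (∑ j, A i j) * x i := by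
  rw [mulVec, dotProduct, sum_mul]
  refine sum_le_sum fun j _ => ?_
  rcases eq_or_ne i j with rfl | hij
  · rfl
  · exact mul_le_mul_of_nonpos_left (hi j) (hA i j hij)

lemma sum_mul_le_mulVec_apply_of_isMax (hA : ∀ i j, i ≠ j → A i j ≤ 0) {i : ι}
    (hi : ∀ j, x j ≤ x i) : (∑ j, A i j) * x i ≤ (A *ᵥ x) i := by
  rw [mulVec, dotProduct, sum_mul]
  refine sum_le_sum fun j _ => ?_
  rcases eq_or_ne i j with rfl | hij
  · rfl
  · exact mul_le_mul_of_nonpos_left (hi j) (hA i j hij)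

theorem le_of_mul_sum_le_mulVec (hA : ∀ i j, i ≠ j → A i j ≤ 0)
    (hrow : ∀ i, 0 < ∑ j, A i j) {c : ℝ} (hx : ∀ i, c * ∑ j, A i j ≤ (A *ᵥ x) i) (i : ι) :
    c ≤ x i := by
  obtain ⟨i₀, -, hmin⟩ := exists_min_image univ x ⟨i, mem_univ i⟩
  have hi₀ := (hx i₀).trans (mulVec_apply_le_sum_mul_of_isMin hA fun j => hmin j (mem_univ j))
  rw [mul_comm] at hi₀
  exact (le_of_mul_le_mul_left hi₀ (hrow i₀)).trans (hmin i (mem_univ i))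

theorem lt_of_mulVec_lt_mul_sum (hA : ∀ i j, i ≠ j → A i j ≤ 0)
    (hrow : ∀ i, 0 < ∑ j, A i j) {c : ℝ} (hx : ∀ i, (A *ᵥ x) i < c * ∑ j, A i j) (i : ι) :
    x i < c := by
  obtain ⟨i₁, -, hmax⟩ := exists_max_image univ x ⟨i, mem_univ i⟩
  have hi₁ := (sum_mul_le_mulVec_apply_of_isMax hA fun j => hmax j (mem_univ j)).trans_lt (hx i₁)
  rw [mul_comm c] at hi₁
  exact (hmax i (mem_univ i)).trans_lt (lt_of_mul_lt_mul_left hi₁ (hrow i₁).le)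

end Matrix

section CardinalityBounds

variable {ι 𝕜 : Type*} [Field 𝕜] [LinearOrder 𝕜] [IsStrictOrderedRing 𝕜]
  {s : Finset ι} {f : ι → 𝕜} {G : ℕ}

lemma sum_le_of_card_le_of_forall_mul_le {b : 𝕜} (hs : #s ≤ G) (hb : 0 ≤ b)
    (hf : ∀ j ∈ s, G * f j ≤ b) : ∑ j ∈ s, f j ≤ b := by
  rcases s.eq_empty_or_nonempty with rfl | hne
  · simpa using hb
  have hG : (0 : 𝕜) < G := by exact_mod_cast hne.card_pos.trans_le hs
  refine le_of_mul_le_mul_left ?_ hG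
  calc (G : 𝕜) * ∑ j ∈ s, f j = ∑ j ∈ s, G * f j := mul_sum _ _ _
    _ ≤ #s * b := by simpa using sum_le_card_nsmul s _ b hf
    _ ≤ G * b := by gcongr

lemma lt_sum_of_card_le_of_forall_lt_mul {a : 𝕜} (hs : #s ≤ G) (ha : a < 0)
    (hf : ∀ j ∈ s, a < G * f j) : a < ∑ j ∈ s, f j := by
  rcases s.eq_empty_or_nonempty with rfl | hne
  · simpa using ha
  have hG : (0 : 𝕜) < G := by exact_mod_cast hne.card_pos.trans_le hs
  refine lt_of_mul_lt_mul_left ?_ hG.le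
  calc (G : 𝕜) * a ≤ #s * a := mul_le_mul_of_nonpos_right (by exact_mod_cast hs) ha.le
    _ = ∑ j ∈ s, a := by simp
    _ < ∑ j ∈ s, G * f j := sum_lt_sum_of_nonempty hne hf
    _ = G * ∑ j ∈ s, f j := (mul_sum _ _ _).symm

end CardinalityBounds

lemma Matrix.mulVec_apply_eq_sum_mul_sub {ι R : Type*} [Fintype ι] [CommRing R]
    {U : Matrix ι ι R} {i : ι} (h : ∑ j, U i j = 0) (φ : ι → R) :
    (U *ᵥ φ) i = ∑ j, U i j * (φ j - φ i) := by
  simp only [mul_sub, sum_sub_distrib, ← sum_mul, h, zero_mul, sub_zero]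
  rfl

lemma Matrix.mulVec_apply_eq_sum_mul_sub_of_diag {ι R : Type*} [Fintype ι] [DecidableEq ι]
    [CommRing R] {U : Matrix ι ι R} {i : ι} {s : Finset ι}
    (hdiag : U i i = -∑ j ∈ univ.filter (· ≠ i), U i j) (hs : ∀ j ∉ s, j ≠ i → U i j = 0)
    (φ : ι → R) : (U *ᵥ φ) i = ∑ j ∈ s, U i j * (φ j - φ i) := by
  have hrow : ∑ j, U i j = 0 := by
    rw [← add_sum_erase univ _ (mem_univ i), ← filter_ne', hdiag, neg_add_cancel]
  rw [mulVec_apply_eq_sum_mul_sub hrow]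
  refine (sum_subset (subset_univ s) fun j _ hj => ?_).symm
  rcases eq_or_ne j i with rfl | hji
  · simp
  · rw [hs j hj hji, zero_mul]

lemma mul_mem_Ioc_of_upwind {a B q μ : ℝ} (ha₀ : 0 ≤ a) (ha₁ : a < 1) (hB : 0 ≤ B)
    (hq : |q| < μ) (hout : 0 < q → B ≤ a) (hin : q < 0 → B ≤ 1 - a) :
    B * q ∈ Set.Ioc (-((1 - a) * μ)) (a * μ) := by
  rw [abs_lt] at hq
  rcases lt_trichotomy q 0 with hq₀ | rfl | hq₀
  · have := hin hq₀
    constructor <;> nlinarith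
  · constructor <;> nlinarith
  · have := hout hq₀
    constructor <;> nlinarith

lemma upwind_flux_mem_Ioc {a b Q x y μ : ℝ} (ha : 0 ≤ a ∧ a < 1) (hb : 0 ≤ b ∧ b < 1)
    (hQ : Q ≤ 0) (hμ : |Q * (y - x)| < μ) :
    Q * (if y < x then a * (1 - b) ^ 2 else b * (1 - a) ^ 2) * (y - x) ∈
      Set.Ioc (-((1 - a) * μ)) (a * μ) := by
  rw [mul_comm Q, mul_assoc]
  obtain ⟨ha₀, ha₁⟩ := ha
  obtain ⟨hb₀, hb₁⟩ := hb
  refine mul_mem_Ioc_of_upwind ha₀ ha₁ (by split_ifs <;> positivity) hμ (fun hq => ?_) fun hq => ?_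
  · rw [if_pos (by nlinarith)]
    nlinarith [mul_le_mul_of_nonneg_left (show (1 - b) ^ 2 ≤ 1 by nlinarith) ha₀]
  · rw [if_neg (by nlinarith)]
    nlinarith [mul_le_mul_of_nonneg_right hb₁.le (show 0 ≤ (1 - a) ^ 2 by positivity)]

lemma abs_flux_lt_of_cfl {Δt G c κ Q δ μ : ℝ} (hΔt : 0 ≤ Δt) (hG : 0 ≤ G) (hμ : 0 < μ)
    (hQ : |Q| ≤ c * μ / κ ^ 2) (hcfl : Δt * c * G / κ ^ 2 * |δ| < 1) :
    |G * Δt * Q * δ| < μ :=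
  calc |G * Δt * Q * δ| = G * Δt * |δ| * |Q| := by
        rw [abs_mul, abs_mul, abs_of_nonneg (mul_nonneg hG hΔt)]; ring
    _ ≤ G * Δt * |δ| * (c * μ / κ ^ 2) := by gcongr
    _ = μ * (Δt * c * G / κ ^ 2 * |δ|) := by ring
    _ < μ := mul_lt_of_lt_one_right hμ hcfl

theorem stmt12_general (N d : ℕ)
    (κ : ℝ) (G : ℕ)
    (m : Fin N → ℝ) (hm : ∀ i, 0 < m i)
    (M : Matrix (Fin N) (Fin N) ℝ) (hM : M = Matrix.diagonal m)
    (Q : Matrix (Fin N) (Fin N) ℝ)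
    (hQoff : ∀ i j, i ≠ j → Q i j ≤ 0)
    (hQbound : ∀ i j, i ≠ j → |Q i j| ≤ (d + 1) * m i / κ ^ 2)
    (Λ : Fin N → Finset (Fin N))
    (hΛ : ∀ i, Λ i = Finset.univ.filter (fun j => j ≠ i ∧ Q i j ≠ 0))
    (hG : ∀ i, (Λ i).card ≤ G)
    (L : Matrix (Fin N) (Fin N) ℝ)
    (hLoff : ∀ i j, i ≠ j → L i j ≤ 0) (hLrow : ∀ i, ∑ j, L i j = 0)
    (Δt : ℝ) (hΔt : 0 < Δt)
    (nk : Fin N → ℝ) (hnk : ∀ i, 0 ≤ nk i ∧ nk i < 1)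
    (φ : Fin N → ℝ)
    (B : Fin N → Fin N → ℝ)
    (hB : ∀ i j, B i j = if φ j < φ i then nk i * (1 - nk j) ^ 2 else nk j * (1 - nk i) ^ 2)
    (U : Matrix (Fin N) (Fin N) ℝ)
    (hUoff : ∀ i j, i ≠ j → U i j = Q i j * B i j)
    (hUdiag : ∀ i, U i i = -∑ j ∈ Finset.univ.filter (· ≠ i), U i j)
    (hCFL : ∀ i, ∀ j ∈ Λ i, Δt * (d + 1) * G / κ ^ 2 * |φ j - φ i| < 1)
    (nk1 : Fin N → ℝ)
    (hsol : (M + Δt • L).mulVec nk1 = M.mulVec nk - Δt • U.mulVec φ) :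
    ∀ i, 0 ≤ nk1 i ∧ nk1 i < 1 := by
  subst hM
  set A := diagonal m + Δt • L
  have hAoff : ∀ i j, i ≠ j → A i j ≤ 0 := fun i j hij => by
    simpa [A, diagonal_apply_ne m hij] using mul_nonpos_of_nonneg_of_nonpos hΔt.le (hLoff i j hij)
  have hArow : ∀ i, ∑ j, A i j = m i := fun i => by
    simp [A, sum_add_distrib, ← mul_sum, hLrow, diagonal_apply]
  have hflux : ∀ i, ∀ j ∈ Λ i, G * (Δt * (U i j * (φ j - φ i))) ∈
      Set.Ioc (-((1 - nk i) * m i)) (nk i * m i) := by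
    intro i j hj
    have hij : i ≠ j := ((mem_filter.1 (hΛ i ▸ hj)).2.1).symm
    convert upwind_flux_mem_Ioc (hnk i) (hnk j)
      (mul_nonpos_of_nonneg_of_nonpos (by positivity) (hQoff i j hij))
      (abs_flux_lt_of_cfl hΔt.le G.cast_nonneg (hm i) (hQbound i j hij) (hCFL i j hj)) using 1
    rw [hUoff i j hij, hB]
    ring
  have hrhs : ∀ i, (A *ᵥ nk1) i = m i * nk i - ∑ j ∈ Λ i, Δt * (U i j * (φ j - φ i)) := by
    intro i
    have hU : ∀ j ∉ Λ i, j ≠ i → U i j = 0 := fun j hj hji => by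
      rw [hUoff i j hji.symm, show Q i j = 0 by simpa [hΛ, hji] using hj, zero_mul]
    rw [hsol, Pi.sub_apply, mulVec_diagonal, Pi.smul_apply, smul_eq_mul,
      mulVec_apply_eq_sum_mul_sub_of_diag (hUdiag i) hU, mul_sum]
  have hrow : ∀ i, 0 < ∑ j, A i j := fun i => hArow i ▸ hm i
  refine fun i => ⟨le_of_mul_sum_le_mulVec hAoff hrow (fun k => ?_) i,
    lt_of_mulVec_lt_mul_sum hAoff hrow (fun k => ?_) i⟩
  · rw [hArow, hrhs, zero_mul, sub_nonneg, mul_comm]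
    exact sum_le_of_card_le_of_forall_mul_le (hG k) (mul_nonneg (hnk k).1 (hm k).le)
      fun j hj => (hflux k j hj).2
  · have := lt_sum_of_card_le_of_forall_lt_mul (hG k)
      (neg_neg_of_pos (mul_pos (sub_pos.2 (hnk k).2) (hm k))) fun j hj => (hflux k j hj).1
    rw [hArow, hrhs]
    linarith

theorem stmt12 (N d : ℕ) (hN : 1 ≤ N) (hd : 1 ≤ d)
    (κ : ℝ) (hκ : 0 < κ) (G : ℕ)
    (m : Fin N → ℝ) (hm : ∀ i, 0 < m i)
    (M : Matrix (Fin N) (Fin N) ℝ) (hM : M = Matrix.diagonal m)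
    (Q : Matrix (Fin N) (Fin N) ℝ) (hQsym : Q.IsSymm)
    (hQoff : ∀ i j, i ≠ j → Q i j ≤ 0)
    (hQbound : ∀ i j, i ≠ j → |Q i j| ≤ (d + 1) * m i / κ ^ 2)
    (Λ : Fin N → Finset (Fin N))
    (hΛ : ∀ i, Λ i = Finset.univ.filter (fun j => j ≠ i ∧ Q i j ≠ 0))
    (hG : ∀ i, (Λ i).card ≤ G)
    (L : Matrix (Fin N) (Fin N) ℝ)
    (hLoff : ∀ i j, i ≠ j → L i j ≤ 0) (hLrow : ∀ i, ∑ j, L i j = 0)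
    (Δt : ℝ) (hΔt : 0 < Δt)
    (nk : Fin N → ℝ) (hnk : ∀ i, 0 ≤ nk i ∧ nk i < 1)
    (φ : Fin N → ℝ)
    (B : Fin N → Fin N → ℝ)
    (hB : ∀ i j, B i j = if φ j < φ i then nk i * (1 - nk j) ^ 2 else nk j * (1 - nk i) ^ 2)
    (U : Matrix (Fin N) (Fin N) ℝ)
    (hUoff : ∀ i j, i ≠ j → U i j = Q i j * B i j)
    (hUdiag : ∀ i, U i i = -∑ j ∈ Finset.univ.filter (· ≠ i), U i j)
    (hCFL : ∀ i, ∀ j ∈ Λ i, Δt * (d + 1) * G / κ ^ 2 * |φ j - φ i| < 1)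
    (nk1 : Fin N → ℝ)
    (hsol : (M + Δt • L).mulVec nk1 = M.mulVec nk - Δt • U.mulVec φ) :
    ∀ i, 0 ≤ nk1 i ∧ nk1 i < 1 :=
  stmt12_general N d κ G m hm M hM Q hQoff hQbound Λ hΛ hG L hLoff hLrow Δt hΔt nk hnk φ B hB U
    hUoff hUdiag hCFL nk1 hsol
end

section
/- (Key inequality in the proof of the discrete H¹-estimate for φ.) Let N ≥ 1, m ∈ ℝᴺ with positive entries and M = diag(m), Q ∈ ℝᴺˣᴺ symmetric positive semidefinite, σ, γ > 0 and n* ∈ (0,1) with (σ/γ)(1 − n*) ≤ 1. Define the affine function r(s) = −(1 − n*)(s + 1) (applied componentwise). Suppose vectors n^{k−1}, n^k, n^{k+1}, υ^{k−1}, υ^k, υ^{k+1} ∈ ℝᴺ satisfy, for ℓ ∈ {k, k+1}, σQυ^ℓ + Mυ^ℓ + (σ/γ)·M·r(υ^{ℓ−1}) = Mn^ℓ. Set δ^ℓ := υ^ℓ − υ^{ℓ−1}. Then σ·(δ^{k+1})ᵀQδ^{k+1} + (1 − (σ/γ)(1 − n*))·Σ_i m_i(δ^{k+1}_i)² + (σ(1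 − n*)/(2γ))·(Σ_i m_i(δ^{k+1}_i)² − Σ_i m_i(δ^k_i)²) ≤ Σ_i m_i (n^{k+1}_i − n^k_i)·δ^{k+1}_i. -/
/-!
Subtracting the scheme at step `k` from the one at step `k + 1` gives, since `r` is affine with
slope `-(1 - n*)`, the linear relation `σ Q δ¹ + M δ¹ - c M δ⁰ = M (nᵏ⁺¹ - nᵏ)` with
`c = (σ/γ)(1 - n*) ≥ 0`. Testing it with `δ¹` and bounding the cross term by Young's inequality
`δ⁰ᵀ M δ¹ ≤ (δ¹ᵀ M δ¹ + δ⁰ᵀ M δ⁰) / 2` gives the estimate.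
-/

open Finset Matrix

section RelaxedStep

variable {ι : Type*} [Fintype ι] (m : ι → ℝ)

theorem sum_mul_mul_le_half_sum_sq (hm : ∀ i, 0 ≤ m i) (x y : ι → ℝ) :
    ∑ i, m i * (x i * y i) ≤ (∑ i, m i * x i ^ 2 + ∑ i, m i * y i ^ 2) / 2 := by
  rw [← sum_add_distrib, sum_div]
  refine sum_le_sum fun i _ => ?_
  nlinarith [mul_nonneg (hm i) (sq_nonneg (x i - y i))]

variable {m} {Q : Matrix ι ι ℝ} {σ c : ℝ} {n₁ n₂ υ₀ υ₁ υ₂ : ι → ℝ}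

theorem relaxedStep_sub
    (h₁ : ∀ i, σ * (Q *ᵥ υ₁) i + m i * υ₁ i - c * m i * (υ₀ i + 1) = m i * n₁ i)
    (h₂ : ∀ i, σ * (Q *ᵥ υ₂) i + m i * υ₂ i - c * m i * (υ₁ i + 1) = m i * n₂ i) (i : ι) :
    σ * (Q *ᵥ (υ₂ - υ₁)) i + m i * (υ₂ - υ₁) i - c * m i * (υ₁ - υ₀) i
      = m i * (n₂ - n₁) i := by
  simp only [mulVec_sub, Pi.sub_apply]
  linear_combination h₂ i - h₁ i

theorem relaxedStep_energy_eq
    (h₁ : ∀ i, σ * (Q *ᵥ υ₁) i + m i * υ₁ i - c * m i * (υ₀ i + 1) = m i * n₁ i)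
    (h₂ : ∀ i, σ * (Q *ᵥ υ₂) i + m i * υ₂ i - c * m i * (υ₁ i + 1) = m i * n₂ i) :
    ∑ i, m i * (n₂ - n₁) i * (υ₂ - υ₁) i
      = σ * ((υ₂ - υ₁) ⬝ᵥ Q *ᵥ (υ₂ - υ₁)) + ∑ i, m i * (υ₂ - υ₁) i ^ 2
        - c * ∑ i, m i * ((υ₁ - υ₀) i * (υ₂ - υ₁) i) := by
  rw [dotProduct, mul_sum, mul_sum, ← sum_add_distrib, ← sum_sub_distrib]
  refine sum_congr rfl fun i _ => ?_
  rw [← relaxedStep_sub h₁ h₂ i]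
  ring

theorem relaxedStep_energy_le (hm : ∀ i, 0 ≤ m i) (hc : 0 ≤ c)
    (h₁ : ∀ i, σ * (Q *ᵥ υ₁) i + m i * υ₁ i - c * m i * (υ₀ i + 1) = m i * n₁ i)
    (h₂ : ∀ i, σ * (Q *ᵥ υ₂) i + m i * υ₂ i - c * m i * (υ₁ i + 1) = m i * n₂ i) :
    σ * ((υ₂ - υ₁) ⬝ᵥ Q *ᵥ (υ₂ - υ₁)) + (1 - c) * ∑ i, m i * (υ₂ - υ₁) i ^ 2
      + c / 2 * (∑ i, m i * (υ₂ - υ₁) i ^ 2 - ∑ i, m i * (υ₁ - υ₀) i ^ 2)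
      ≤ ∑ i, m i * (n₂ - n₁) i * (υ₂ - υ₁) i := by
  have young := mul_le_mul_of_nonneg_left
    (sum_mul_mul_le_half_sum_sq m hm (υ₁ - υ₀) (υ₂ - υ₁)) hc
  rw [relaxedStep_energy_eq h₁ h₂]
  linarith

end RelaxedStep

theorem stmt14_general (N : ℕ)
    (m : Fin N → ℝ) (hm : ∀ i, 0 < m i)
    (Q : Matrix (Fin N) (Fin N) ℝ)
    (σ γ ns : ℝ) (hσ : 0 < σ) (hγ : 0 < γ) (hns : ns ∈ Set.Ioo (0 : ℝ) 1)
    (nk nk1 υkm υk υk1 : Fin N → ℝ)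
    (heqk : ∀ i, σ * (Q.mulVec υk) i + m i * υk i
      + σ / γ * (m i * (-(1 - ns) * (υkm i + 1))) = m i * nk i)
    (heqk1 : ∀ i, σ * (Q.mulVec υk1) i + m i * υk1 i
      + σ / γ * (m i * (-(1 - ns) * (υk i + 1))) = m i * nk1 i) :
    σ * dotProduct (fun i => υk1 i - υk i) (Q.mulVec fun i => υk1 i - υk i)
      + (1 - σ / γ * (1 - ns)) * ∑ i, m i * (υk1 i - υk i) ^ 2
      + σ * (1 - ns) / (2 * γ) *
          ((∑ i, m i * (υk1 i - υk i) ^ 2) - ∑ i, m i * (υk i - υkm i) ^ 2)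
      ≤ ∑ i, m i * (nk1 i - nk i) * (υk1 i - υk i) := by
  have hc : 0 ≤ σ / γ * (1 - ns) := by
    have := hns.2
    positivity
  have hhalf : σ * (1 - ns) / (2 * γ) = σ / γ * (1 - ns) / 2 := by
    field_simp
  rw [hhalf]
  exact relaxedStep_energy_le (fun i => (hm i).le) hc
    (fun i => by linear_combination heqk i) (fun i => by linear_combination heqk1 i)

theorem stmt14 (N : ℕ) (hN : 1 ≤ N)
    (m : Fin N → ℝ) (hm : ∀ i, 0 < m i)
    (Q : Matrix (Fin N) (Fin N) ℝ) (hQ : Q.PosSemidef)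
    (σ γ ns : ℝ) (hσ : 0 < σ) (hγ : 0 < γ) (hns : ns ∈ Set.Ioo (0 : ℝ) 1)
    (hsmall : σ / γ * (1 - ns) ≤ 1)
    (nk nk1 υkm υk υk1 : Fin N → ℝ)
    (heqk : ∀ i, σ * (Q.mulVec υk) i + m i * υk i
      + σ / γ * (m i * (-(1 - ns) * (υkm i + 1))) = m i * nk i)
    (heqk1 : ∀ i, σ * (Q.mulVec υk1) i + m i * υk1 i
      + σ / γ * (m i * (-(1 - ns) * (υk i + 1))) = m i * nk1 i) :
    σ * dotProduct (fun i => υk1 i - υk i) (Q.mulVec fun i => υk1 i - υk i)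
      + (1 - σ / γ * (1 - ns)) * ∑ i, m i * (υk1 i - υk i) ^ 2
      + σ * (1 - ns) / (2 * γ) *
          ((∑ i, m i * (υk1 i - υk i) ^ 2) - ∑ i, m i * (υk i - υkm i) ^ 2)
      ≤ ∑ i, m i * (nk1 i - nk i) * (υk1 i - υk i) :=
  stmt14_general N m hm Q σ γ ns hσ hγ hns nk nk1 υkm υk υk1 heqk heqk1
end
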